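/- Let G be a weighted graph on V = {1,…,n} with arbitrary real weights w_{ij}. For each node i, define the vector a^i ∈ ℝ^P, where P is the set of unordered pairs of distinct elements of [n], by: a^i_{{i,j}} = w_{ij}/2 if w_{ij} < 0; a^i_{{i,j}} = w_{ij}/2 if w_{ij} > 0 and i < j; a^i_{{i,j}} = −w_{ij}/2 if w_{ij} > 0 and i > j; and a^i_{{k,l}} = 0 whenever i ∉ {k,l}. Then for every partition of V into two clusters C₁ and C₂: disagree(G, {C₁,C₂}) = ‖Σ_{ℓ∈C₁} a^ℓ − Σ_{ℓ∈C₂} a^ℓ‖₁, where ‖·‖₁ is the sum of absolute values of the coordinates. -/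
import Mathlib


/-- `disagreeScore w c` is `disagree(G, C)` for the clustering whose clusters are the
fibers of the labelling `c`. -/
noncomputable def disagreeScore {V : Type*} [Fintype V] [DecidableEq V]
    {κ : Type*} [DecidableEq κ] (w : V → V → ℝ) (c : V → κ) : ℝ :=
  (∑ p ∈ Finset.univ.offDiag,
      if (0 < w p.1 p.2 ∧ c p.1 ≠ c p.2) ∨ (w p.1 p.2 < 0 ∧ c p.1 = c p.2)
      then |w p.1 p.2| else 0) / 2

/-- The node vector `a^i ∈ ℝ^P` of the third data structure; coordinates are indexed by
ordered pairs `(k, l)` with `k < l`, standing for the unordered pair `{k, l}`. -/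
noncomputable def nodeVec {n : ℕ} (w : Fin n → Fin n → ℝ) (i : Fin n)
    (p : Fin n × Fin n) : ℝ :=
  if i = p.1 ∨ i = p.2 then
    (let j : Fin n := if i = p.1 then p.2 else p.1
     if w i j < 0 then w i j / 2
     else if 0 < w i j then (if i < j then w i j / 2 else -(w i j) / 2)
     else 0)
  else 0

/-- for every partition of `V = {1,…,n}` into two clusters `C₁`, `C₂`,
`disagree(G, {C₁, C₂}) = ‖Σ_{ℓ∈C₁} a^ℓ − Σ_{ℓ∈C₂} a^ℓ‖₁`. -/
theorem two_cluster_disagree_eq_l1 {n : ℕ} (w : Fin n → Fin n → ℝ)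
    (hsymm : ∀ i j, w i j = w j i)
    (C₁ C₂ : Finset (Fin n)) (hdisj : Disjoint C₁ C₂) (hcover : C₁ ∪ C₂ = Finset.univ)
    (h₁ : C₁.Nonempty) (h₂ : C₂.Nonempty) :
    disagreeScore w (fun v => if v ∈ C₁ then true else false) =
      ∑ p ∈ Finset.univ.filter (fun p : Fin n × Fin n => p.1 < p.2),
        |(∑ l ∈ C₁, nodeVec w l p) - ∑ l ∈ C₂, nodeVec w l p| := by
  classical
  set c : Fin n → Bool := fun v => if v ∈ C₁ then true else false with hc
  set f : Fin n × Fin n → ℝ := fun p =>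
    if (0 < w p.1 p.2 ∧ c p.1 ≠ c p.2) ∨ (w p.1 p.2 < 0 ∧ c p.1 = c p.2)
    then |w p.1 p.2| else 0 with hf
  have hC₂ : C₂ = C₁ᶜ := by
    ext x
    have h1 : x ∈ C₁ ∪ C₂ := by rw [hcover]; exact Finset.mem_univ x
    have h2 : ¬(x ∈ C₁ ∧ x ∈ C₂) := fun ⟨ha, hb⟩ => Finset.disjoint_left.mp hdisj ha hb
    simp only [Finset.mem_union] at h1
    simp only [Finset.mem_compl]
    tauto
  -- Step 1: LHS = ∑ over p.1 < p.2 of f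
  have hoff : (Finset.univ.offDiag : Finset ((Fin n) × (Fin n))) =
      Finset.univ.filter (fun p : Fin n × Fin n => p.1 < p.2) ∪
      Finset.univ.filter (fun p : Fin n × Fin n => p.2 < p.1) := by
    ext p
    simp only [Finset.mem_offDiag, Finset.mem_union, Finset.mem_filter, Finset.mem_univ,
      true_and]
    constructor
    · intro h; exact lt_or_gt_of_ne h
    · rintro (h | h); exacts [ne_of_lt h, (ne_of_lt h).symm]
  have hdisj2 : Disjoint (Finset.univ.filter (fun p : Fin n × Fin n => p.1 < p.2))
      (Finset.univ.filter (fun p : Fin n × Fin n => p.2 < p.1)) := by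
    rw [Finset.disjoint_left]
    intro p hp hp'
    simp only [Finset.mem_filter] at hp hp'
    omega
  have hswap : ∑ p ∈ Finset.univ.filter (fun p : Fin n × Fin n => p.2 < p.1), f p =
      ∑ p ∈ Finset.univ.filter (fun p : Fin n × Fin n => p.1 < p.2), f p := by
    apply Finset.sum_nbij' (fun p => (p.2, p.1)) (fun p => (p.2, p.1))
    · intro p hp; simp only [Finset.mem_filter, Finset.mem_univ, true_and] at *; exact hp
    · intro p hp; simp only [Finset.mem_filter, Finset.mem_univ, true_and] at *; exact hp
    · intro p _; rfl
    · intro p _; rfl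
    · intro p _
      simp only [hf]
      rw [hsymm p.2 p.1]
      exact if_congr (or_congr (and_congr Iff.rfl ne_comm) (and_congr Iff.rfl eq_comm))
        rfl rfl
  have step1 : disagreeScore w c =
      ∑ p ∈ Finset.univ.filter (fun p : Fin n × Fin n => p.1 < p.2), f p := by
    unfold disagreeScore
    rw [hoff, Finset.sum_union hdisj2, hswap]
    ring
  rw [step1]
  -- Step 2: pointwise equality
  apply Finset.sum_congr rfl
  intro p hp
  have hlt : p.1 < p.2 := (Finset.mem_filter.mp hp).2
  have hne : p.1 ≠ p.2 := ne_of_lt hlt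
  have key : ∀ F : Fin n → ℝ,
      ∑ l, (if l ∈ C₁ then F l else -F l) = (∑ l ∈ C₁, F l) - ∑ l ∈ C₁ᶜ, F l := by
    intro F
    rw [← Finset.sum_add_sum_compl C₁ (fun l => if l ∈ C₁ then F l else -F l)]
    rw [Finset.sum_congr rfl (fun x hx => if_pos hx),
      Finset.sum_congr rfl (fun x hx => if_neg (Finset.mem_compl.mp hx)),
      Finset.sum_neg_distrib]
    ring
  have red : (∑ l ∈ C₁, nodeVec w l p) - ∑ l ∈ C₂, nodeVec w l p =
      (if p.1 ∈ C₁ then nodeVec w p.1 p else -nodeVec w p.1 p) +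
      (if p.2 ∈ C₁ then nodeVec w p.2 p else -nodeVec w p.2 p) := by
    rw [hC₂, ← key]
    rw [← Finset.sum_subset (Finset.subset_univ {p.1, p.2})]
    · rw [Finset.sum_pair hne]
    · intro x _ hx
      simp only [Finset.mem_insert, Finset.mem_singleton] at hx
      push_neg at hx
      have : nodeVec w x p = 0 := by
        unfold nodeVec; rw [if_neg]; push_neg; exact hx
      simp [this]
  rw [red]
  have hg1 : nodeVec w p.1 p =
      (if w p.1 p.2 < 0 then w p.1 p.2 / 2
       else if 0 < w p.1 p.2 then w p.1 p.2 / 2 else 0) := by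
    unfold nodeVec
    rw [if_pos (Or.inl rfl)]
    simp only [if_pos rfl, if_true, if_pos hlt]
  have hg2 : nodeVec w p.2 p =
      (if w p.1 p.2 < 0 then w p.1 p.2 / 2
       else if 0 < w p.1 p.2 then -(w p.1 p.2) / 2 else 0) := by
    unfold nodeVec
    rw [if_pos (Or.inr rfl)]
    simp only [if_neg hne.symm, if_false, hsymm p.2 p.1, if_neg (asymm hlt)]
  rw [hg1, hg2]
  simp only [hf]
  rcases lt_trichotomy (w p.1 p.2) 0 with hw | hw | hw
  · by_cases h1 : p.1 ∈ C₁ <;> by_cases h2 : p.2 ∈ C₁ <;>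
      simp [hc, h1, h2, hw, asymm hw, abs_of_neg hw] <;> ring_nf <;>
      simp [abs_neg, abs_of_neg hw]
  · rw [hw]
    by_cases h1 : p.1 ∈ C₁ <;> by_cases h2 : p.2 ∈ C₁ <;> simp [hc, h1, h2]
  · by_cases h1 : p.1 ∈ C₁ <;> by_cases h2 : p.2 ∈ C₁ <;>
      simp [hc, h1, h2, hw, asymm hw, abs_of_pos hw] <;> ring_nf <;>
      simp [abs_neg, abs_of_pos hw]
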